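/- Suppose the PPDG sequence {(x^k, y^k)} is bounded and the Lyapunov function 𝓛 is a KL function satisfying the Łojasiewicz property with exponent θ = 0 (i.e. with concave function φ(s) = σ s for some σ > 0). Then the sequence {(x^k, y^k)} converges in finitely many steps: there exists an integer K such that (x^k, y^k) = (x^K, y^K) for all k ≥ K. -/

import Mathlib

open RealInnerProductSpace Filter

noncomputable section

/-- The convex subdifferential of a real-valued convex function. -/
def subdiff {Y : Type*} [NormedAddCommGroup Y] [InnerProductSpace ℝ Y]
    (φ : Y → ℝ) (q : Y) : Set Y :=
  {g : Y | ∀ w : Y, φ q + ⟪g, w - q⟫ ≤ φ w}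

/-- The Lyapunov function `𝓛` as a function of `z = (x,y,u,v)`. -/
def LyapFn {X : Type*} [NormedAddCommGroup X] [InnerProductSpace ℝ X]
    {Y : Type*} [NormedAddCommGroup Y] [InnerProductSpace ℝ Y]
    (A : X →L[ℝ] Y) (f : X → ℝ) (hs : Y → ℝ) (a b : ℝ)
    (z : X × Y × X × X) : ℝ :=
  (f z.1 + ⟪z.2.1, A z.1⟫ - hs z.2.1) - a * ‖z.1 - z.2.2.1‖^2 + b * ‖z.1 - z.2.2.2‖^2

/-- The subdifferential of the Lyapunov function `𝓛` at `z = (x,y,u,v)`. -/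
def subLyap {X : Type*} [NormedAddCommGroup X] [InnerProductSpace ℝ X]
    [FiniteDimensional ℝ X]
    {Y : Type*} [NormedAddCommGroup Y] [InnerProductSpace ℝ Y] [FiniteDimensional ℝ Y]
    (A : X →L[ℝ] Y) (f' : X → X) (hs : Y → ℝ) (a b : ℝ)
    (z : X × Y × X × X) : Set (X × Y × X × X) :=
  {d | ∃ g ∈ subdiff hs z.2.1,
    d = (f' z.1 + (ContinuousLinearMap.adjoint A) z.2.1
          - (2*a) • (z.1 - z.2.2.1) + (2*b) • (z.1 - z.2.2.2),
        A z.1 - g,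
        (2*a) • (z.1 - z.2.2.1),
        (2*b) • (z.2.2.2 - z.1))}

/-!
The PPDG iterates make the Lyapunov function `𝓛` decrease along
`zᵏ = (xᵏ⁺¹, yᵏ⁺¹, xᵏ⁺², xᵏ)` by at least `c (‖xᵏ⁺² - xᵏ⁺¹‖² + ‖xᵏ⁺¹ - xᵏ‖²)`: the descent
lemma for `f`, the subgradient inequality for `h*` coming from the `y`-update, and three Young
inequalities. Boundedness makes `𝓛(zᵏ)` converge to some `ℓ`, so the steps tend to zero, and
with them an explicit element of `∂𝓛(zᵏ)`. Every cluster point `p` of `(zᵏ)` is then critical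
with `𝓛(p) = ℓ`. If `𝓛(zᵏ) > ℓ` for all `k`, the Łojasiewicz inequality with `θ = 0` at `p` reads
`1 ≤ σ · dist(0, ∂𝓛(zᵏ))` along a subsequence, which contradicts `dist(0, ∂𝓛(zᵏ)) → 0`.
Hence `𝓛(zᵏ) = ℓ` eventually, the decrease forces `xᵏ⁺¹ = xᵏ`, and the `y`-steps vanish too
because `A†` is injective (`A` being surjective).
-/

open scoped InnerProduct
open Set Metric Topology

theorem le_add_inner_add_of_lipschitz_gradient
    {X : Type*} [NormedAddCommGroup X] [InnerProductSpace ℝ X] [CompleteSpace X]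
    {f : X → ℝ} {f' : X → X} (hf : ∀ p, HasGradientAt f (f' p) p)
    {L : ℝ} (hLip : ∀ p q, ‖f' p - f' q‖ ≤ L * ‖p - q‖) (p q : X) :
    f q ≤ f p + ⟪f' p, q - p⟫ + L / 2 * ‖q - p‖ ^ 2 := by
  set v := q - p
  set g : ℝ → ℝ := fun t => f (p + t • v) - t * ⟪f' p, v⟫ - t ^ 2 * (L / 2 * ‖v‖ ^ 2)
  have hg : ∀ t : ℝ, HasDerivAt g (⟪f' (p + t • v) - f' p, v⟫ - t * (L * ‖v‖ ^ 2)) t := by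
    intro t
    have hline : HasDerivAt (fun t : ℝ => p + t • v) v t := by
      simpa using ((hasDerivAt_id t).smul_const v).const_add p
    have hfline := (hf (p + t • v)).hasFDerivAt.comp_hasDerivAt t hline
    have := ((hfline.sub ((hasDerivAt_id t).mul_const ⟪f' p, v⟫)).sub
      ((hasDerivAt_pow 2 t).mul_const (L / 2 * ‖v‖ ^ 2)))
    refine this.congr_deriv ?_
    simp only [InnerProductSpace.toDual_apply_apply, inner_sub_left]
    ring
  have hderiv : ∀ t ∈ Ioo (0 : ℝ) 1, ⟪f' (p + t • v) - f' p, v⟫ ≤ t * (L * ‖v‖ ^ 2) := by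
    intro t ht
    calc ⟪f' (p + t • v) - f' p, v⟫ ≤ ‖f' (p + t • v) - f' p‖ * ‖v‖ := real_inner_le_norm _ _
      _ ≤ L * ‖t • v‖ * ‖v‖ := by
          gcongr
          simpa using hLip (p + t • v) p
      _ = t * (L * ‖v‖ ^ 2) := by rw [norm_smul, Real.norm_of_nonneg ht.1.le]; ring
  have hanti : AntitoneOn g (Icc 0 1) := by
    apply antitoneOn_of_deriv_nonpos (convex_Icc 0 1)
      (fun t _ => (hg t).continuousAt.continuousWithinAt)
      (fun t _ => (hg t).differentiableAt.differentiableWithinAt)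
    intro t ht
    rw [interior_Icc] at ht
    rw [(hg t).deriv]
    linarith [hderiv t ht]
  have := hanti (left_mem_Icc.mpr zero_le_one) (right_mem_Icc.mpr zero_le_one) zero_le_one
  simp only [g, one_smul, zero_smul, add_zero, one_pow, one_mul, zero_mul, sub_zero,
    add_sub_cancel, v] at this
  norm_num at this
  linarith

section Subdifferential

variable {Y : Type*} [NormedAddCommGroup Y] [InnerProductSpace ℝ Y]

theorem isClosed_setOf_mem_subdiff {φ : Y → ℝ} (hφ : Continuous φ) :
    IsClosed {q : Y × Y | q.2 ∈ subdiff φ q.1} := by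
  have : {q : Y × Y | q.2 ∈ subdiff φ q.1} = ⋂ w, {q : Y × Y | φ q.1 + ⟪q.2, w - q.1⟫ ≤ φ w} := by
    ext; simp [subdiff]
  rw [this]
  exact isClosed_iInter fun w => isClosed_le (by fun_prop) continuous_const

theorem ConvexOn.sub_apply_mem_subdiff_of_minimizes {φ : Y → ℝ} (hφ : ConvexOn ℝ univ φ)
    {Q : Y →L[ℝ] Y} (hQ : Q.IsPositive) {r y₀ v : Y}
    (hmin : ∀ w, φ v - ⟪v, r⟫ + (1/2) * ⟪Q (v - y₀), v - y₀⟫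
      ≤ φ w - ⟪w, r⟫ + (1/2) * ⟪Q (w - y₀), w - y₀⟫) :
    r - Q (v - y₀) ∈ subdiff φ v := by
  intro w
  set h := w - v
  set u := v - y₀
  -- comparing `v` with `v + t h` gives the subgradient inequality up to an `O(t)` error
  have key : ∀ t ∈ Ioc (0 : ℝ) 1, φ v + ⟪r - Q u, h⟫ ≤ φ w + t * (⟪Q h, h⟫ / 2) := by
    rintro t ⟨ht₀, ht₁⟩
    have hconv : φ (v + t • h) ≤ (1 - t) * φ v + t * φ w := by
      have := hφ.2 (mem_univ v) (mem_univ w) (by linarith : (0 : ℝ) ≤ 1 - t) ht₀.le (by ring)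
      rwa [show (1 - t) • v + t • w = v + t • h by simp only [h]; module, smul_eq_mul,
        smul_eq_mul] at this
    have hquad : ⟪Q (v + t • h - y₀), v + t • h - y₀⟫
        = ⟪Q u, u⟫ + 2 * t * ⟪Q u, h⟫ + t ^ 2 * ⟪Q h, h⟫ := by
      rw [show v + t • h - y₀ = u + t • h by simp only [u]; abel, map_add, map_smul,
        inner_add_left, inner_add_right, inner_add_right, real_inner_smul_left,
        real_inner_smul_right, real_inner_smul_left, real_inner_smul_right,
        hQ.inner_left_eq_inner_right h u, real_inner_comm (Q u) h]
      ring
    have hmin' := hmin (v + t • h)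
    rw [hquad, inner_add_left, real_inner_smul_left] at hmin'
    rw [inner_sub_left, real_inner_comm h r]
    nlinarith
  have hlim : Tendsto (fun t : ℝ => φ w + t * (⟪Q h, h⟫ / 2)) (𝓝[>] 0) (𝓝 (φ w)) :=
    tendsto_nhdsWithin_of_tendsto_nhds ((by fun_prop : Continuous _).tendsto' 0 _ (by simp))
  exact ge_of_tendsto hlim (eventually_of_mem (Ioc_mem_nhdsGT zero_lt_one) key)

end Subdifferential

theorem ContinuousLinearMap.adjoint_injective_of_surjective
    {X : Type*} [NormedAddCommGroup X] [InnerProductSpace ℝ X] [CompleteSpace X]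
    {Y : Type*} [NormedAddCommGroup Y] [InnerProductSpace ℝ Y] [CompleteSpace Y]
    {A : X →L[ℝ] Y} (hA : Function.Surjective A) : Function.Injective (A†) := by
  refine (injective_iff_map_eq_zero _).mpr fun v hv => ?_
  obtain ⟨u, rfl⟩ := hA v
  rw [← inner_self_eq_zero (𝕜 := ℝ), ← ContinuousLinearMap.adjoint_inner_left, hv, inner_zero_left]

section Lyapunov

variable {X : Type*} [NormedAddCommGroup X] [InnerProductSpace ℝ X]
  {Y : Type*} [NormedAddCommGroup Y] [InnerProductSpace ℝ Y]
  (A : X →L[ℝ] Y) {f : X → ℝ} {f' : X → X} {hs : Y → ℝ} (a b : ℝ)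

theorem continuous_lyapFn (hf : Continuous f) (hs_cont : Continuous hs) :
    Continuous (LyapFn A f hs a b) := by
  unfold LyapFn
  fun_prop

theorem isClosed_setOf_mem_subLyap [FiniteDimensional ℝ X] [FiniteDimensional ℝ Y]
    (hf' : Continuous f') (hs_cont : Continuous hs) :
    IsClosed {q : (X × Y × X × X) × (X × Y × X × X) | q.2 ∈ subLyap A f' hs a b q.1} := by
  -- the free coordinate `A x - g` of a subgradient determines `g`
  have hset : {q : (X × Y × X × X) × (X × Y × X × X) | q.2 ∈ subLyap A f' hs a b q.1}
      = {q | (q.1.2.1, A q.1.1 - q.2.2.1) ∈ {p : Y × Y | p.2 ∈ subdiff hs p.1}} ∩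
        {q | q.2 = (f' q.1.1 + (A†) q.1.2.1 - (2*a) • (q.1.1 - q.1.2.2.1)
          + (2*b) • (q.1.1 - q.1.2.2.2), q.2.2.1, (2*a) • (q.1.1 - q.1.2.2.1),
          (2*b) • (q.1.2.2.2 - q.1.1))} := by
    ext ⟨z, d⟩
    constructor
    · rintro ⟨g, hg, hd⟩
      dsimp only at hg hd
      subst hd
      simpa using hg
    · rintro ⟨hg, hd⟩
      exact ⟨_, hg, by rw [hd]; simp⟩
  rw [hset]
  exact ((isClosed_setOf_mem_subdiff hs_cont).preimage (by fun_prop)).inter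
    (isClosed_eq (by fun_prop) (by fun_prop))

end Lyapunov

theorem exists_tendsto_of_antitone_of_isBounded {Z : Type*} [MetricSpace Z] [ProperSpace Z]
    {F : Z → ℝ} (hF : Continuous F) {z : ℕ → Z} (hz : Bornology.IsBounded (range z))
    (hanti : Antitone (F ∘ z)) : ∃ ℓ, Tendsto (F ∘ z) atTop (𝓝 ℓ) := by
  have hbdd : BddBelow (range (F ∘ z)) :=
    (hz.isCompact_closure.bddBelow_image hF.continuousOn).mono
      (by rw [range_comp]; exact image_mono subset_closure)
  exact ⟨_, tendsto_atTop_ciInf hanti hbdd⟩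

theorem tendsto_zero_of_mul_norm_sq_le_sub_succ {V : Type*} [NormedAddCommGroup V]
    {E : ℕ → ℝ} {ℓ : ℝ} (hE : Tendsto E atTop (𝓝 ℓ)) {c : ℝ} (hc : 0 < c) {d : ℕ → V}
    (hd : ∀ k, c * ‖d k‖ ^ 2 ≤ E k - E (k + 1)) : Tendsto d atTop (𝓝 0) := by
  have hgap : Tendsto (fun k => (E k - E (k + 1)) / c) atTop (𝓝 0) := by
    simpa using (hE.sub (hE.comp (tendsto_add_atTop_nat 1))).div_const c
  have hsq : Tendsto (fun k => ‖d k‖ ^ 2) atTop (𝓝 0) :=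
    squeeze_zero (fun k => sq_nonneg _) (fun k => by rw [le_div_iff₀ hc]; linarith [hd k]) hgap
  rw [tendsto_zero_iff_norm_tendsto_zero]
  simpa using hsq.sqrt

theorem eventuallyConst_comp_of_lojasiewicz_exponent_zero
    {Z W : Type*} [MetricSpace Z] [ProperSpace Z] [NormedAddCommGroup W]
    {F : Z → ℝ} (hF : Continuous F) {S : Z → Set W} (hS : IsClosed {q : Z × W | q.2 ∈ S q.1})
    (hKL : ∀ p, (S p).Nonempty → ∃ η : ℝ, 0 < η ∧ ∃ U ∈ 𝓝 p, ∃ σ : ℝ, 0 < σ ∧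
      ∀ w ∈ U, 0 < F w - F p → F w - F p < η → 1 ≤ σ * infDist 0 (S w))
    {z : ℕ → Z} (hz : Bornology.IsBounded (range z)) {ℓ : ℝ}
    (hanti : Antitone (F ∘ z)) (hℓ : Tendsto (F ∘ z) atTop (𝓝 ℓ))
    {D : ℕ → W} (hD : ∀ k, D k ∈ S (z k)) (hD0 : Tendsto D atTop (𝓝 0)) :
    EventuallyConst (F ∘ z) atTop := by
  have hle : ∀ k, ℓ ≤ F (z k) := hanti.le_of_tendsto hℓ
  suffices ∃ K, F (z K) = ℓ by
    obtain ⟨K, hK⟩ := this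
    refine eventuallyConst_atTop.mpr ⟨K, fun k hk => ?_⟩
    exact le_antisymm (hK ▸ hanti hk) (hle k) |>.trans hK.symm
  by_contra! hne
  have hgt : ∀ k, ℓ < F (z k) := fun k => (hle k).lt_of_ne (hne k).symm
  obtain ⟨p, -, φ, hφ, hzφ⟩ := tendsto_subseq_of_bounded hz fun k => mem_range_self k
  have hℓφ := hℓ.comp hφ.tendsto_atTop
  have hDφ := hD0.comp hφ.tendsto_atTop
  have hFp : F p = ℓ := tendsto_nhds_unique ((hF.tendsto p).comp hzφ) hℓφ
  have hp : (0 : W) ∈ S p :=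
    hS.mem_of_tendsto (hzφ.prodMk_nhds hDφ) (Eventually.of_forall fun j => hD (φ j))
  obtain ⟨η, hη, U, hU, σ, hσ, hKLp⟩ := hKL p ⟨0, hp⟩
  have hU' : ∀ᶠ j in atTop, z (φ j) ∈ U := hzφ.eventually_mem hU
  have hη' : ∀ᶠ j in atTop, F (z (φ j)) - ℓ < η := by
    simpa using (hℓφ.sub_const ℓ).eventually_lt_const (by simpa using hη)
  have hσ' : ∀ᶠ j in atTop, σ * ‖D (φ j)‖ < 1 := by
    simpa using ((hDφ.norm.const_mul σ).eventually_lt_const (by simp))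
  obtain ⟨j, hjU, hjη, hjσ⟩ := (hU'.and (hη'.and hσ')).exists
  have hKLj := hKLp _ hjU (by rw [hFp]; linarith [hgt (φ j)]) (by rwa [hFp])
  have hdist : infDist 0 (S (z (φ j))) ≤ ‖D (φ j)‖ := by
    simpa using infDist_le_dist_of_mem (x := (0 : W)) (hD (φ j))
  linarith [mul_le_mul_of_nonneg_left hdist hσ.le]

theorem eventuallyConst_of_mul_norm_sq_le_sub_succ {V : Type*} [NormedAddCommGroup V]
    {E : ℕ → ℝ} {c : ℝ} (hc : 0 < c) {u : ℕ → V}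
    (hu : ∀ k, c * ‖u (k + 1) - u k‖ ^ 2 ≤ E k - E (k + 1)) (hE : EventuallyConst E atTop) :
    EventuallyConst u atTop := by
  obtain ⟨n, hn⟩ := eventuallyConst_atTop_nat.mp hE
  refine eventuallyConst_atTop_nat.mpr ⟨n, fun k hk => ?_⟩
  have h := hu k
  rw [hn k hk, sub_self] at h
  exact sub_eq_zero.mp (by simpa [hc.ne'] using le_antisymm h (by positivity))

-- Three Young inequalities with these weights absorb the cross terms: this is where the
-- constants `b` and `c` come from.
theorem ppdg_coeff_le {α δ L b c : ℝ} (hα : 0 < α) (hδ : 0 < δ) (hL : 0 < L)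
    (hb : b = 1/(2*α) - L/4 - δ/α - α*δ*L^2/2 - δ*L + α*L^2/(4*δ))
    (hc : c = b - α*L^2/(2*δ)) (n₀ n₁ n₂ : ℝ) :
    (L/2 - 1/α + δ/α + b) * n₁^2 - δ/α * n₂^2 - b * n₀^2
      + L * (n₂ * n₀) + L * (n₁ * n₀) + α * L^2 * (n₁ * n₀) ≤ -c * n₁^2 - c * n₀^2 := by
  have hP : 0 < 1 + α*L := by positivity
  have young₁ : α*L^2*(n₁*n₀) ≤ δ*L*(1+α*L)*n₁^2 + α^2*L^3/(4*δ*(1+α*L))*n₀^2 := by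
    rw [← sub_nonneg]
    have e : δ*L*(1+α*L)*n₁^2 + α^2*L^3/(4*δ*(1+α*L))*n₀^2 - α*L^2*(n₁*n₀)
        = (2*(δ*L*(1+α*L))*n₁ - α*L^2*n₀)^2 / (4*(δ*L*(1+α*L))) := by
      field_simp; ring
    rw [e]; positivity
  have young₂ : L*(n₂*n₀) ≤ δ/α*n₂^2 + α*L^2/(4*δ)*n₀^2 := by
    rw [← sub_nonneg]
    have e : δ/α*n₂^2 + α*L^2/(4*δ)*n₀^2 - L*(n₂*n₀) = (2*δ*n₂ - α*L*n₀)^2 / (4*δ*α) := by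
      field_simp; ring
    rw [e]; positivity
  have young₃ : L*(n₁*n₀) ≤ δ/α*(1+α*L)*n₁^2 + α*L^2/(4*δ*(1+α*L))*n₀^2 := by
    rw [← sub_nonneg]
    have e : δ/α*(1+α*L)*n₁^2 + α*L^2/(4*δ*(1+α*L))*n₀^2 - L*(n₁*n₀)
        = (2*δ*(1+α*L)*n₁ - α*L*n₀)^2 / (4*δ*α*(1+α*L)) := by
      field_simp; ring
    rw [e]; positivity
  have hsum : (L/2 - 1/α + δ/α + b) * n₁^2 - δ/α * n₂^2 - b * n₀^2
      + (δ*L*(1+α*L)*n₁^2 + α^2*L^3/(4*δ*(1+α*L))*n₀^2)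
      + (δ/α*n₂^2 + α*L^2/(4*δ)*n₀^2)
      + (δ/α*(1+α*L)*n₁^2 + α*L^2/(4*δ*(1+α*L))*n₀^2) = -c * n₁^2 - c * n₀^2 := by
    rw [hc, hb]; field_simp; ring
  linarith

section PPDG

variable {X : Type*} [NormedAddCommGroup X] [InnerProductSpace ℝ X] [FiniteDimensional ℝ X]
  {Y : Type*} [NormedAddCommGroup Y] [InnerProductSpace ℝ Y] [FiniteDimensional ℝ Y]
  {A : X →L[ℝ] Y} {f : X → ℝ} {f' : X → X} {hs : Y → ℝ} {α : ℝ} {x : ℕ → X} {y : ℕ → Y}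

theorem ppdg_primal_step (hxiter : ∀ k, x (k+1) = x k - α • (f' (x k) + (A†) (y k))) (k : ℕ) :
    α • (f' (x k) + (A†) (y k)) = x k - x (k+1) := by
  rw [hxiter k]; abel

theorem ppdg_adjoint_dual_step (hxiter : ∀ k, x (k+1) = x k - α • (f' (x k) + (A†) (y k)))
    (k : ℕ) :
    α • (A†) (y (k+1) - y k)
      = (x (k+1) - x k) - (x (k+2) - x (k+1)) - α • (f' (x (k+1)) - f' (x k)) := by
  have h₀ := ppdg_primal_step hxiter k
  have h₁ := ppdg_primal_step hxiter (k+1)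
  rw [map_sub]
  linear_combination (norm := module) h₁ - h₀

theorem ppdg_coupling_eq (hα : α ≠ 0)
    (hxiter : ∀ k, x (k+1) = x k - α • (f' (x k) + (A†) (y k))) (k : ℕ) :
    ⟪y (k+2), A (x (k+2))⟫ - ⟪y (k+1), A (x (k+1))⟫
      - ⟪A ((2:ℝ) • x (k+1) - x k) - α • A ((A†) (y (k+1) - y k)), y (k+2) - y (k+1)⟫
    = -(‖x (k+2) - x (k+1)‖ ^ 2 / α) - ⟪f' (x (k+1)), x (k+2) - x (k+1)⟫
      + ⟪(x (k+3) - x (k+2)) - (x (k+2) - x (k+1)), f' (x (k+1)) - f' (x k)⟫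
      + α * ⟪f' (x (k+2)) - f' (x (k+1)), f' (x (k+1)) - f' (x k)⟫ := by
  set v := y (k+2) - y (k+1)
  set Δ := f' (x (k+1)) - f' (x k)
  have hAadj : ∀ u w, ⟪w, A u⟫ = ⟪(A†) w, u⟫ := fun u w =>
    (ContinuousLinearMap.adjoint_inner_left A u w).symm
  have hdual : x (k+2) - ((2:ℝ) • x (k+1) - x k - α • (A†) (y (k+1) - y k)) = -(α • Δ) := by
    rw [ppdg_adjoint_dual_step hxiter k]; module
  have hprimal : (A†) (y (k+1)) = α⁻¹ • (x (k+1) - x (k+2)) - f' (x (k+1)) := by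
    rw [← ppdg_primal_step hxiter (k+1), smul_smul, inv_mul_cancel₀ hα, one_smul,
      add_sub_cancel_left]
  calc _ = ⟪(A†) v, x (k+2) - ((2:ℝ) • x (k+1) - x k - α • (A†) (y (k+1) - y k))⟫
          + ⟪(A†) (y (k+1)), x (k+2) - x (k+1)⟫ := by
        have hBv : (A†) (y (k+2)) = (A†) v + (A†) (y (k+1)) := by simp [v]
        rw [hAadj (x (k+2)), hAadj (x (k+1)), ← map_smul, ← map_sub, real_inner_comm v, hAadj,
          hBv, inner_add_left, inner_sub_right ((A†) v) (x (k+2)),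
          inner_sub_right ((A†) (y (k+1))) (x (k+2))]
        ring
    _ = -⟪α • (A†) v, Δ⟫ + ⟪α⁻¹ • (x (k+1) - x (k+2)) - f' (x (k+1)), x (k+2) - x (k+1)⟫ := by
        rw [hdual, hprimal, inner_neg_right, real_inner_smul_right, real_inner_smul_left]
    _ = _ := by
        have hv : α • (A†) v = (x (k+2) - x (k+1)) - (x (k+3) - x (k+2))
            - α • (f' (x (k+2)) - f' (x (k+1))) := ppdg_adjoint_dual_step hxiter (k+1)
        rw [hv, inner_sub_left (α⁻¹ • _), ← neg_sub (x (k+2)) (x (k+1)), smul_neg,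
          inner_neg_left, real_inner_smul_left, real_inner_self_eq_norm_sq]
        simp only [inner_sub_left, real_inner_smul_left]
        ring

theorem ppdg_lyap_le (hf : ∀ p, HasGradientAt f (f' p) p) {Lf : ℝ}
    (hLip : ∀ p q, ‖f' p - f' q‖ ≤ Lf * ‖p - q‖) (hα : α ≠ 0)
    (hxiter : ∀ k, x (k+1) = x k - α • (f' (x k) + (A†) (y k)))
    (hsub : ∀ k, A ((2:ℝ) • x (k+1) - x k) - α • A ((A†) (y (k+1) - y k)) ∈ subdiff hs (y (k+1)))
    (a b : ℝ) (k : ℕ) :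
    LyapFn A f hs a b (x (k+2), y (k+2), x (k+3), x (k+1))
      ≤ LyapFn A f hs a b (x (k+1), y (k+1), x (k+2), x k)
        + (Lf/2 - 1/α + a + b) * ‖x (k+2) - x (k+1)‖^2 - a * ‖x (k+3) - x (k+2)‖^2
        - b * ‖x (k+1) - x k‖^2
        + ⟪(x (k+3) - x (k+2)) - (x (k+2) - x (k+1)), f' (x (k+1)) - f' (x k)⟫
        + α * ⟪f' (x (k+2)) - f' (x (k+1)), f' (x (k+1)) - f' (x k)⟫ := by
  have hdescent := le_add_inner_add_of_lipschitz_gradient hf hLip (x (k+1)) (x (k+2))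
  have hsubgrad := hsub k (y (k+2))
  have hcoupling := ppdg_coupling_eq hα hxiter k
  simp only [LyapFn]
  rw [norm_sub_rev (x (k+1)) (x (k+2)), norm_sub_rev (x (k+2)) (x (k+3))]
  have : ‖x (k+2) - x (k+1)‖ ^ 2 / α = 1/α * ‖x (k+2) - x (k+1)‖ ^ 2 := by ring
  linarith

theorem ppdg_lyap_decrease (hf : ∀ p, HasGradientAt f (f' p) p) {Lf : ℝ}
    (hLf : 0 < Lf) (hLip : ∀ p q, ‖f' p - f' q‖ ≤ Lf * ‖p - q‖) (hα : 0 < α)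
    (hxiter : ∀ k, x (k+1) = x k - α • (f' (x k) + (A†) (y k)))
    (hsub : ∀ k, A ((2:ℝ) • x (k+1) - x k) - α • A ((A†) (y (k+1) - y k)) ∈ subdiff hs (y (k+1)))
    {δ a b c : ℝ} (hδ : 0 < δ) (hadef : a = δ / α)
    (hbdef : b = 1/(2*α) - Lf/4 - δ/α - α*δ*Lf^2/2 - δ*Lf + α*Lf^2/(4*δ))
    (hcdef : c = b - α*Lf^2/(2*δ)) (k : ℕ) :
    LyapFn A f hs a b (x (k+2), y (k+2), x (k+3), x (k+1))
        + c * ‖x (k+2) - x (k+1)‖^2 + c * ‖x (k+1) - x k‖^2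
      ≤ LyapFn A f hs a b (x (k+1), y (k+1), x (k+2), x k) := by
  have hle := ppdg_lyap_le hf hLip hα.ne' hxiter hsub a b k
  have hΔ₀ := hLip (x (k+1)) (x k)
  have hΔ₁ := hLip (x (k+2)) (x (k+1))
  have hcross₁ : ⟪(x (k+3) - x (k+2)) - (x (k+2) - x (k+1)), f' (x (k+1)) - f' (x k)⟫
      ≤ Lf * (‖x (k+3) - x (k+2)‖ * ‖x (k+1) - x k‖)
        + Lf * (‖x (k+2) - x (k+1)‖ * ‖x (k+1) - x k‖) :=
    calc _ ≤ ‖(x (k+3) - x (k+2)) - (x (k+2) - x (k+1))‖ * ‖f' (x (k+1)) - f' (x k)‖ :=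
          real_inner_le_norm _ _
      _ ≤ (‖x (k+3) - x (k+2)‖ + ‖x (k+2) - x (k+1)‖) * (Lf * ‖x (k+1) - x k‖) := by
          gcongr; exact norm_sub_le _ _
      _ = _ := by ring
  have hcross₂ : α * ⟪f' (x (k+2)) - f' (x (k+1)), f' (x (k+1)) - f' (x k)⟫
      ≤ α * Lf^2 * (‖x (k+2) - x (k+1)‖ * ‖x (k+1) - x k‖) :=
    calc _ ≤ α * (‖f' (x (k+2)) - f' (x (k+1))‖ * ‖f' (x (k+1)) - f' (x k)‖) := by
          gcongr; exact real_inner_le_norm _ _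
      _ ≤ α * ((Lf * ‖x (k+2) - x (k+1)‖) * (Lf * ‖x (k+1) - x k‖)) := by gcongr
      _ = _ := by ring
  have hcoeff := ppdg_coeff_le hα hδ hLf hbdef hcdef
    ‖x (k+1) - x k‖ ‖x (k+2) - x (k+1)‖ ‖x (k+3) - x (k+2)‖
  subst hadef
  linarith

theorem ppdg_subgrad_mem (hconv : ConvexOn ℝ univ hs) (hα : 0 < α)
    (hyiter : ∀ k : ℕ, ∀ w : Y,
      hs (y (k+1)) - ⟪y (k+1), A ((2:ℝ) • x (k+1) - x k)⟫
        + (1/2) * ⟪α • A ((A†) (y (k+1) - y k)), y (k+1) - y k⟫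
      ≤ hs w - ⟪w, A ((2:ℝ) • x (k+1) - x k)⟫
        + (1/2) * ⟪α • A ((A†) (w - y k)), w - y k⟫) (k : ℕ) :
    A ((2:ℝ) • x (k+1) - x k) - α • A ((A†) (y (k+1) - y k)) ∈ subdiff hs (y (k+1)) :=
  hconv.sub_apply_mem_subdiff_of_minimizes
    ((ContinuousLinearMap.isPositive_self_comp_adjoint A).smul_of_nonneg hα.le) (hyiter k)

theorem ppdg_exists_subLyap_tendsto_zero {Lf : ℝ}
    (hLip : ∀ p q, ‖f' p - f' q‖ ≤ Lf * ‖p - q‖) (hα : α ≠ 0)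
    (hxiter : ∀ k, x (k+1) = x k - α • (f' (x k) + (A†) (y k)))
    (hsub : ∀ k, A ((2:ℝ) • x (k+1) - x k) - α • A ((A†) (y (k+1) - y k)) ∈ subdiff hs (y (k+1)))
    (a b : ℝ) (hd : Tendsto (fun k => x (k+1) - x k) atTop (𝓝 0)) :
    ∃ D : ℕ → X × Y × X × X, (∀ k, D k ∈ subLyap A f' hs a b (x (k+1), y (k+1), x (k+2), x k))
      ∧ Tendsto D atTop (𝓝 0) := by
  -- the canonical subgradient is a fixed linear function of `d₀ = x₁ - x₀`, `d₁ = x₂ - x₁`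
  -- and `f' x₁ - f' x₀`
  set Ψ : X × X × X → X × Y × X × X := fun e =>
    (-(α⁻¹ • e.2.1) - (2*a) • -e.2.1 + (2*b) • e.1, A (-e.2.1 - α • e.2.2),
      (2*a) • -e.2.1, (2*b) • -e.1)
  have hΔ : Tendsto (fun k => f' (x (k+1)) - f' (x k)) atTop (𝓝 0) :=
    squeeze_zero_norm (fun k => hLip _ _) (by simpa using hd.norm.const_mul Lf)
  refine ⟨fun k => Ψ (x (k+1) - x k, x (k+2) - x (k+1), f' (x (k+1)) - f' (x k)),
    fun k => ⟨_, hsub k, ?_⟩, ?_⟩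
  · have hgrad : f' (x (k+1)) + (A†) (y (k+1)) = -(α⁻¹ • (x (k+2) - x (k+1))) := by
      rw [← smul_neg, neg_sub, ← ppdg_primal_step hxiter (k+1), smul_smul, inv_mul_cancel₀ hα,
        one_smul]
    refine Prod.ext ?_ (Prod.ext ?_ (Prod.ext ?_ ?_))
    · simp only [Ψ]; rw [hgrad]; module
    · simp only [Ψ]
      rw [← map_smul, ← map_sub, ← map_sub, ppdg_adjoint_dual_step hxiter k]
      congr 1; module
    · simp only [Ψ]; module
    · simp only [Ψ]; module
  · have hΨ : Continuous Ψ := by fun_prop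
    have hΨ0 : Ψ 0 = 0 := by simp [Ψ]
    have := (hΨ.tendsto 0).comp
      (hd.prodMk_nhds ((hd.comp (tendsto_add_atTop_nat 1)).prodMk_nhds hΔ))
    rw [hΨ0] at this
    exact this

theorem ppdg_eventuallyConst_dual (hA : Function.Surjective A) (hα : α ≠ 0)
    (hxiter : ∀ k, x (k+1) = x k - α • (f' (x k) + (A†) (y k)))
    (hx : EventuallyConst x atTop) : EventuallyConst y atTop := by
  obtain ⟨n, hn⟩ := eventuallyConst_atTop_nat.mp hx
  refine eventuallyConst_atTop_nat.mpr ⟨n, fun m hm => ?_⟩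
  have hdual := ppdg_adjoint_dual_step hxiter m
  have hx₂ : x (m+2) = x (m+1) := hn (m+1) (by omega)
  rw [hx₂, hn m hm] at hdual
  simp only [sub_self, smul_zero, smul_eq_zero] at hdual
  exact sub_eq_zero.mp (ContinuousLinearMap.adjoint_injective_of_surjective hA
    ((hdual.resolve_left hα).trans (map_zero _).symm))

end PPDG

theorem stmt8_general
    {X : Type*} [NormedAddCommGroup X] [InnerProductSpace ℝ X] [FiniteDimensional ℝ X]
    {Y : Type*} [NormedAddCommGroup Y] [InnerProductSpace ℝ Y] [FiniteDimensional ℝ Y]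
    (A : X →L[ℝ] Y) (hA : Function.Surjective A)
    (f : X → ℝ) (f' : X → X) (hf : ∀ p, HasGradientAt f (f' p) p)
    (Lf : ℝ) (hLf : 0 < Lf) (hLip : ∀ p q, ‖f' p - f' q‖ ≤ Lf * ‖p - q‖)
    (hs : Y → ℝ) (hconv : ConvexOn ℝ Set.univ hs)
    (α : ℝ) (hα : 0 < α)
    (x : ℕ → X) (y : ℕ → Y)
    (hxiter : ∀ k : ℕ,
      x (k+1) = x k - α • (f' (x k) + (ContinuousLinearMap.adjoint A) (y k)))
    (hyiter : ∀ k : ℕ, ∀ w : Y,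
      hs (y (k+1)) - ⟪y (k+1), A ((2:ℝ) • x (k+1) - x k)⟫
        + (1/2) * ⟪α • A ((ContinuousLinearMap.adjoint A) (y (k+1) - y k)), y (k+1) - y k⟫
      ≤ hs w - ⟪w, A ((2:ℝ) • x (k+1) - x k)⟫
        + (1/2) * ⟪α • A ((ContinuousLinearMap.adjoint A) (w - y k)), w - y k⟫)
    (δ a b c : ℝ) (hδ : 0 < δ)
    (hadef : a = δ / α)
    (hbdef : b = 1/(2*α) - Lf/4 - δ/α - α*δ*Lf^2/2 - δ*Lf + α*Lf^2/(4*δ))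
    (hcdef : c = b - α*Lf^2/(2*δ))
    (hcpos : 0 < c)
    (hbound : ∃ R : ℝ, ∀ k : ℕ, ‖x k‖ ≤ R ∧ ‖y k‖ ≤ R)
    (hKL : ∀ z : X × Y × X × X, (subLyap A f' hs a b z).Nonempty →
      ∃ η : ℝ, 0 < η ∧ ∃ U ∈ nhds z, ∃ σ : ℝ, 0 < σ ∧
        (∀ w ∈ U, 0 < LyapFn A f hs a b w - LyapFn A f hs a b z →
          LyapFn A f hs a b w - LyapFn A f hs a b z < η →
          1 ≤ σ * Metric.infDist (0 : X × Y × X × X) (subLyap A f' hs a b w))) :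
    ∃ K : ℕ, ∀ k : ℕ, K ≤ k → x k = x K ∧ y k = y K := by
  obtain ⟨R, hR⟩ := hbound
  have hf'_cont : Continuous f' :=
    (LipschitzWith.of_dist_le' fun p q => by simpa [dist_eq_norm] using hLip p q).continuous
  have hs_cont : Continuous hs := continuousOn_univ.mp (hconv.continuousOn isOpen_univ)
  have hF := continuous_lyapFn A a b (continuous_iff_continuousAt.mpr fun p =>
    (hf p).differentiableAt.continuousAt) hs_cont
  have hsub := ppdg_subgrad_mem hconv hα hyiter
  set z : ℕ → X × Y × X × X := fun k => (x (k+1), y (k+1), x (k+2), x k)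
  have hdec : ∀ k, LyapFn A f hs a b (z (k+1)) + c * ‖x (k+1+1) - x (k+1)‖ ^ 2
      + c * ‖x (k+1) - x k‖ ^ 2 ≤ LyapFn A f hs a b (z k) :=
    ppdg_lyap_decrease hf hLf hLip hα hxiter hsub hδ hadef hbdef hcdef
  have hgap : ∀ k, c * ‖x (k+1) - x k‖ ^ 2
      ≤ LyapFn A f hs a b (z k) - LyapFn A f hs a b (z (k+1)) :=
    fun k => by nlinarith [hdec k, sq_nonneg ‖x (k+1+1) - x (k+1)‖]
  have hanti : Antitone (LyapFn A f hs a b ∘ z) :=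
    antitone_nat_of_succ_le fun k => sub_nonneg.mp (le_trans (by positivity) (hgap k))
  have hz : Bornology.IsBounded (range z) := isBounded_iff_forall_norm_le.mpr
    ⟨R, by rintro _ ⟨k, rfl⟩; simp [z, hR]⟩
  obtain ⟨ℓ, hℓ⟩ := exists_tendsto_of_antitone_of_isBounded hF hz hanti
  obtain ⟨D, hD, hD0⟩ := ppdg_exists_subLyap_tendsto_zero hLip hα.ne' hxiter hsub a b
    (tendsto_zero_of_mul_norm_sq_le_sub_succ hℓ hcpos hgap)
  have hE : EventuallyConst (LyapFn A f hs a b ∘ z) atTop :=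
    eventuallyConst_comp_of_lojasiewicz_exponent_zero hF
      (isClosed_setOf_mem_subLyap A a b hf'_cont hs_cont) hKL hz hanti hℓ hD hD0
  have hx : EventuallyConst x atTop := eventuallyConst_of_mul_norm_sq_le_sub_succ hcpos hgap hE
  obtain ⟨K, hK⟩ := eventuallyConst_atTop.mp
    (hx.prodMk (ppdg_eventuallyConst_dual hA hα.ne' hxiter hx))
  exact ⟨K, fun k hk => Prod.ext_iff.mp (hK k hk)⟩

/-- under the Łojasiewicz property with exponent `θ = 0` (`φ(s) = σ s`),
the bounded PPDG sequence converges in finitely many steps. -/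
theorem stmt8
    {X : Type*} [NormedAddCommGroup X] [InnerProductSpace ℝ X] [FiniteDimensional ℝ X]
    {Y : Type*} [NormedAddCommGroup Y] [InnerProductSpace ℝ Y] [FiniteDimensional ℝ Y]
    (A : X →L[ℝ] Y) (hA : Function.Surjective A)
    (f : X → ℝ) (f' : X → X) (hf : ∀ p, HasGradientAt f (f' p) p)
    (Lf : ℝ) (hLf : 0 < Lf) (hLip : ∀ p q, ‖f' p - f' q‖ ≤ Lf * ‖p - q‖)
    (hs : Y → ℝ) (hconv : ConvexOn ℝ Set.univ hs)
    (hbdd : ∀ w : Y, BddBelow (Set.range fun p : X => f p + ⟪w, A p⟫ - hs w))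
    (α : ℝ) (hα : 0 < α)
    (x : ℕ → X) (y : ℕ → Y)
    (hxiter : ∀ k : ℕ,
      x (k+1) = x k - α • (f' (x k) + (ContinuousLinearMap.adjoint A) (y k)))
    (hyiter : ∀ k : ℕ, ∀ w : Y,
      hs (y (k+1)) - ⟪y (k+1), A ((2:ℝ) • x (k+1) - x k)⟫
        + (1/2) * ⟪α • A ((ContinuousLinearMap.adjoint A) (y (k+1) - y k)), y (k+1) - y k⟫
      ≤ hs w - ⟪w, A ((2:ℝ) • x (k+1) - x k)⟫
        + (1/2) * ⟪α • A ((ContinuousLinearMap.adjoint A) (w - y k)), w - y k⟫)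
    (δ a b c : ℝ) (hδ : 0 < δ)
    (hadef : a = δ / α)
    (hbdef : b = 1/(2*α) - Lf/4 - δ/α - α*δ*Lf^2/2 - δ*Lf + α*Lf^2/(4*δ))
    (hcdef : c = b - α*Lf^2/(2*δ))
    (hapos : 0 < a) (hbpos : 0 < b) (hcpos : 0 < c)
    (hbound : ∃ R : ℝ, ∀ k : ℕ, ‖x k‖ ≤ R ∧ ‖y k‖ ≤ R)
    (hKL : ∀ z : X × Y × X × X, (subLyap A f' hs a b z).Nonempty →
      ∃ η : ℝ, 0 < η ∧ ∃ U ∈ nhds z, ∃ σ : ℝ, 0 < σ ∧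
        (∀ w ∈ U, 0 < LyapFn A f hs a b w - LyapFn A f hs a b z →
          LyapFn A f hs a b w - LyapFn A f hs a b z < η →
          1 ≤ σ * Metric.infDist (0 : X × Y × X × X) (subLyap A f' hs a b w))) :
    ∃ K : ℕ, ∀ k : ℕ, K ≤ k → x k = x K ∧ y k = y K :=
  stmt8_general A hA f f' hf Lf hLf hLip hs hconv α hα x y hxiter hyiter δ a b c hδ hadef hbdef
    hcdef hcpos hbound hKL
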